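/- arXiv:1102.5077 — 7 statements merged into one kernel-verified Lean document; each statement's English description precedes it below -/
import Mathlib

section
/- If X is a compact Hausdorff topological space, then the weight of X is at most the cardinality of X (when X is infinite), i.e., w(X) ≤ |X|. -/
open TopologicalSpace Cardinal

/-- The weight of a topological space: the minimal cardinality of a basis. -/
noncomputable def weight (X : Type*) [TopologicalSpace X] : Cardinal :=
  ⨅ B : {B : Set (Set X) // IsTopologicalBasis B}, Cardinal.mk B.1

theorem weight_le_mk_of_compact (X : Type*) [TopologicalSpace X] [CompactSpace X]
    [T2Space X] [Infinite X] : weight X ≤ Cardinal.mk X := by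
  classical
  set t := ‹TopologicalSpace X› with ht_def
  have sep : ∀ p : {p : X × X // p.1 ≠ p.2}, ∃ uv : Set X × Set X,
      IsOpen uv.1 ∧ IsOpen uv.2 ∧ p.1.1 ∈ uv.1 ∧ p.1.2 ∈ uv.2 ∧ Disjoint uv.1 uv.2 := by
    rintro ⟨⟨x, y⟩, h⟩
    obtain ⟨u, v, hu, hv, hx, hy, huv⟩ := t2_separation h
    exact ⟨(u, v), hu, hv, hx, hy, huv⟩
  choose f hf1 hf2 hf3 hf4 hf5 using sep
  set S : Set (Set X) :=
    Set.range (fun p => (f p).1) ∪ Set.range (fun p => (f p).2) with hS_def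
  have hSopen : ∀ s ∈ S, IsOpen s := by
    rintro s (⟨p, rfl⟩ | ⟨p, rfl⟩)
    · exact hf1 p
    · exact hf2 p
  have hle : t ≤ generateFrom S := le_generateFrom hSopen
  have hT2 : @T2Space X (generateFrom S) := by
    refine @T2Space.mk X (generateFrom S) ?_
    intro x y hxy
    refine ⟨(f ⟨(x, y), hxy⟩).1, (f ⟨(x, y), hxy⟩).2,
      isOpen_generateFrom_of_mem (Or.inl ⟨_, rfl⟩),
      isOpen_generateFrom_of_mem (Or.inr ⟨_, rfl⟩),
      hf3 _, hf4 _, hf5 _⟩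
  have hcont : @Continuous X X t (generateFrom S) id := continuous_id_iff_le.2 hle
  have hclosed : @IsClosedMap X X t (generateFrom S) id :=
    @Continuous.isClosedMap X X t (generateFrom S) ‹CompactSpace X› hT2 id hcont
  have hge : generateFrom S ≤ t := by
    rw [TopologicalSpace.le_def]
    intro s hs
    have h1 : @IsClosed X t sᶜ := isClosed_compl_iff.mpr hs
    have h2 : @IsClosed X (generateFrom S) (id '' sᶜ) := hclosed _ h1
    rw [Set.image_id] at h2
    exact (@isClosed_compl_iff X (generateFrom S) s).mp h2
  have htop : t = generateFrom S := le_antisymm hle hge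
  set B : Set (Set X) := (fun g => ⋂₀ g) '' {g : Set (Set X) | g.Finite ∧ g ⊆ S} with hB_def
  have hB : IsTopologicalBasis B := isTopologicalBasis_of_subbasis htop
  have hw : weight X ≤ Cardinal.mk B := ciInf_le' _ (⟨B, hB⟩ : {B : Set (Set X) // IsTopologicalBasis B})
  refine hw.trans ?_
  -- cardinality bounds
  have hSX : Cardinal.mk S ≤ Cardinal.mk X := by
    have h1 : Cardinal.mk S ≤ Cardinal.mk (Set.range fun p => (f p).1) +
        Cardinal.mk (Set.range fun p => (f p).2) := Cardinal.mk_union_le _ _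
    have h2 : Cardinal.mk (Set.range fun p : {p : X × X // p.1 ≠ p.2} => (f p).1)
        ≤ Cardinal.mk {p : X × X // p.1 ≠ p.2} := Cardinal.mk_range_le
    have h3 : Cardinal.mk (Set.range fun p : {p : X × X // p.1 ≠ p.2} => (f p).2)
        ≤ Cardinal.mk {p : X × X // p.1 ≠ p.2} := Cardinal.mk_range_le
    have h4 : Cardinal.mk {p : X × X // p.1 ≠ p.2} ≤ Cardinal.mk (X × X) :=
      Cardinal.mk_subtype_le _
    have h5 : Cardinal.mk (X × X) = Cardinal.mk X := by
      simp [Cardinal.mk_prod, Cardinal.mul_eq_self (Cardinal.aleph0_le_mk X)]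
    calc Cardinal.mk S ≤ _ + _ := h1
      _ ≤ Cardinal.mk X + Cardinal.mk X := by
          exact add_le_add (h2.trans (h4.trans_eq h5)) (h3.trans (h4.trans_eq h5))
      _ = Cardinal.mk X := Cardinal.add_eq_self (Cardinal.aleph0_le_mk X)
  have himg : Cardinal.mk B ≤ Cardinal.mk {g : Set (Set X) | g.Finite ∧ g ⊆ S} :=
    Cardinal.mk_image_le
  refine himg.trans ?_
  have hsub : {g : Set (Set X) | g.Finite ∧ g ⊆ S} ⊆
      Set.range (fun F : Finset S => (fun x => (x : Set X)) '' (↑F : Set S)) := by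
    rintro g ⟨hgfin, hgS⟩
    lift g to Set S using hgS with g' hg'
    have : g'.Finite :=
      Set.Finite.of_finite_image hgfin Subtype.val_injective.injOn
    refine ⟨this.toFinset, ?_⟩
    simp [hg']
  have h6 : Cardinal.mk {g : Set (Set X) | g.Finite ∧ g ⊆ S} ≤ Cardinal.mk (Finset S) :=
    (Cardinal.mk_le_mk_of_subset hsub).trans Cardinal.mk_range_le
  refine h6.trans ?_
  by_cases hSfin : Finite S
  · haveI := hSfin
    haveI := Fintype.ofFinite ↥S
    exact (Cardinal.lt_aleph0_of_finite (Finset ↥S)).le.trans (Cardinal.aleph0_le_mk X)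
  · have : Infinite S := not_finite_iff_infinite.mp hSfin
    rw [Cardinal.mk_finset_of_infinite]
    exact hSX
end

section
/- Every locally compact Hausdorff space X satisfies w(X) ≤ max(|X|, ℵ₀) — in particular, an infinite locally compact Hausdorff space X satisfies w(X) ≤ |X|. -/
/-!
A compact Hausdorff space `X` has a basis indexed by `X × List X`: choose for all `x ≠ y` an open
`U x y ∋ x` whose closure misses `y`. If `x ∈ W` with `W` open, the compact set `Wᶜ` is covered
by finitely many of the open sets `(closure (U x y))ᶜ`, and the intersection of the corresponding
`U x y` is a neighbourhood of `x` inside `W`. A locally compact Hausdorff space embeds openly into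
its one-point compactification, which has one point more.
-/

open TopologicalSpace Cardinal

theorem Cardinal.max_aleph0_add_one (a : Cardinal) : max ℵ₀ (a + 1) = max ℵ₀ a := by
  rcases le_or_gt ℵ₀ a with ha | ha
  · rw [add_one_eq ha]
  · rw [max_eq_left ha.le, max_eq_left (add_lt_aleph0 ha one_lt_aleph0).le]

theorem Cardinal.mk_prod_list_le_max (α : Type*) : #(α × List α) ≤ max ℵ₀ #α :=
  (mk_le_of_injective (f := fun p : α × List α => p.1 :: p.2)
    fun _ _ h => Prod.ext (List.cons.inj h).1 (List.cons.inj h).2).trans (mk_list_le_max α)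

section weight

universe u

variable {X : Type u} [TopologicalSpace X]

theorem weight_le_mk {B : Set (Set X)} (hB : IsTopologicalBasis B) : weight X ≤ #B :=
  ciInf_le (OrderBot.bddBelow _) (⟨B, hB⟩ : {B : Set (Set X) // IsTopologicalBasis B})

theorem Topology.IsInducing.weight_le {Y : Type u} [TopologicalSpace Y] {f : X → Y}
    (hf : IsInducing f) : weight X ≤ weight Y :=
  have : Nonempty {B : Set (Set Y) // IsTopologicalBasis B} := ⟨⟨_, isTopologicalBasis_opens⟩⟩
  le_ciInf fun B => (weight_le_mk (B.2.isInducing hf)).trans mk_image_le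

theorem weight_le_max_aleph0_mk [CompactSpace X] [T2Space X] : weight X ≤ max ℵ₀ #X := by
  have hsep : ∀ x y : X, ∃ U, IsOpen U ∧ x ∈ U ∧ (x ≠ y → y ∉ closure U) := by
    intro x y
    by_cases hxy : x = y
    · exact ⟨Set.univ, isOpen_univ, Set.mem_univ x, fun h => (h hxy).elim⟩
    · obtain ⟨U, V, hU, hV, hxU, hyV, hUV⟩ := t2_separation hxy
      exact ⟨U, hU, hxU, fun _ hyU => (hUV.closure_left hV).notMem_of_mem_left hyU hyV⟩
  choose U hUopen hxU hyU using hsep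
  refine (weight_le_mk (B := Set.range fun p : X × List X => ⋂ y ∈ p.2, U p.1 y) ?_).trans
    (mk_range_le.trans (mk_prod_list_le_max X))
  refine isTopologicalBasis_of_isOpen_of_nhds ?_ fun x W hxW hW => ?_
  · rintro _ ⟨⟨x, l⟩, rfl⟩
    exact l.finite_toSet.isOpen_biInter fun y _ => hUopen x y
  · obtain ⟨t, -, hcover⟩ := hW.isClosed_compl.isCompact.elim_nhds_subcover
      (fun y => (closure (U x y))ᶜ)
      fun y hy => isClosed_closure.isOpen_compl.mem_nhds (hyU x y (ne_of_mem_of_not_mem hxW hy))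
    refine ⟨_, ⟨(x, t.toList), rfl⟩, Set.mem_iInter₂.2 fun y _ => hxU x y, fun z hz => ?_⟩
    by_contra hzW
    obtain ⟨y, hyt, hzy⟩ := Set.mem_iUnion₂.1 (hcover hzW)
    exact hzy (subset_closure (Set.mem_iInter₂.1 hz y (Finset.mem_toList.2 hyt)))

end weight

theorem weight_le_of_locallyCompact (X : Type*) [TopologicalSpace X]
    [LocallyCompactSpace X] [T2Space X] :
    weight X ≤ max (Cardinal.mk X) Cardinal.aleph0 ∧
      (Infinite X → weight X ≤ Cardinal.mk X) := by
  have hX : weight X ≤ max #X ℵ₀ := calc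
    weight X ≤ weight (OnePoint X) := (OnePoint.isOpenEmbedding_coe (X := X)).isInducing.weight_le
    _ ≤ max ℵ₀ #(Option X) := weight_le_max_aleph0_mk
    _ = max #X ℵ₀ := by rw [mk_option, max_aleph0_add_one, max_comm]
  exact ⟨hX, fun _ => hX.trans_eq (max_eq_left (aleph0_le_mk X))⟩
end

section
/- If the weight w(X) of a Hausdorff topological space X is a strong limit cardinal, then w(X) ≤ |X|. -/
open TopologicalSpace Cardinal

theorem weight_le_mk_of_isStrongLimit (X : Type*) [TopologicalSpace X] [T2Space X]
    (h : (weight X).IsStrongLimit) : weight X ≤ Cardinal.mk X := by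
  by_contra hlt
  push_neg at hlt
  have hle : weight X ≤ 2 ^ Cardinal.mk X := by
    have := ciInf_le' (fun B : {B : Set (Set X) // IsTopologicalBasis B} => Cardinal.mk B.1) ⟨{s : Set X | IsOpen s}, isTopologicalBasis_opens⟩
    refine this.trans ?_
    calc Cardinal.mk {s : Set X | IsOpen s} ≤ Cardinal.mk (Set X) := Cardinal.mk_set_le _
      _ = 2 ^ Cardinal.mk X := Cardinal.mk_set
  exact absurd hle (not_le.2 (h.two_power_lt hlt))
end

section
/- Let κ be a regular uncountable cardinal, G a topological group, and H a subgroup of G with |H| ≤ 2^(2^κ). Let D be the union over all subsets A of H of cardinality at most κ of the closures of A in G. Then D is a subgroup of G containing H, and if each such closure has cardinality at most 2^(2^κ), then |D| ≤ 2^(2^κ). -/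
/-!
If `a ∈ closure A` and `b ∈ closure B` then `a * b ∈ closure (A * B)` and
`a⁻¹ ∈ closure A⁻¹`, and `A * B`, `A⁻¹` are again subsets of `H` of size at most `κ`
because `κ * κ = κ`.
For the bound, there are at most `(2 ^ 2 ^ κ) ^ κ = 2 ^ 2 ^ κ` such subsets `A`.
-/

open Cardinal Set Pointwise

namespace Set

variable {X : Type u} [TopologicalSpace X]

def boundedClosure (s : Set X) (κ : Cardinal.{u}) : Set X :=
  ⋃ A ∈ {A : Set X | A ⊆ s ∧ #A ≤ κ}, closure A

theorem mem_boundedClosure {s : Set X} {κ : Cardinal.{u}} {x : X} :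
    x ∈ boundedClosure s κ ↔ ∃ A ⊆ s, #A ≤ κ ∧ x ∈ closure A := by
  simp only [boundedClosure, mem_iUnion₂, mem_ofPred_eq, exists_prop, and_assoc]

theorem subset_boundedClosure {s : Set X} {κ : Cardinal.{u}} (hκ : 1 ≤ κ) :
    s ⊆ boundedClosure s κ := fun x hx =>
  mem_boundedClosure.2
    ⟨{x}, singleton_subset_iff.2 hx, by rwa [mk_singleton], subset_closure rfl⟩

theorem mk_boundedClosure_le {s : Set X} {κ μ : Cardinal.{u}} (hs : #s ≤ μ)
    (hμ : ℵ₀ ≤ μ) (hμκ : μ ^ κ ≤ μ) (hcl : ∀ A ⊆ s, #A ≤ κ → #(closure A) ≤ μ) :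
    #(boundedClosure s κ) ≤ μ := by
  have hsmall : #{A : Set X | A ⊆ s ∧ #A ≤ κ} ≤ μ :=
    calc #{A : Set X | A ⊆ s ∧ #A ≤ κ} ≤ max #s ℵ₀ ^ κ := mk_bounded_subset_le s κ
      _ ≤ μ ^ κ := power_le_power_right (max_le hs hμ)
      _ ≤ μ := hμκ
  calc #(boundedClosure s κ)
      ≤ #{A : Set X | A ⊆ s ∧ #A ≤ κ} *
          ⨆ A : {A : Set X | A ⊆ s ∧ #A ≤ κ}, #(closure A.1) := mk_biUnion_le _ _
    _ ≤ μ * μ := mul_le_mul' hsmall (ciSup_le' fun A => hcl A.1 A.2.1 A.2.2)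
    _ = μ := mul_eq_self hμ

end Set

namespace Subgroup

variable {G : Type u} [Group G] [TopologicalSpace G] [IsTopologicalGroup G]

def boundedClosure (H : Subgroup G) {κ : Cardinal.{u}} (hκ : ℵ₀ ≤ κ) : Subgroup G where
  carrier := (H : Set G).boundedClosure κ
  mul_mem' {a b} ha hb := by
    obtain ⟨A, hAH, hAκ, ha⟩ := mem_boundedClosure.1 ha
    obtain ⟨B, hBH, hBκ, hb⟩ := mem_boundedClosure.1 hb
    refine mem_boundedClosure.2
      ⟨A * B, mul_subset_iff.2 fun x hx y hy => H.mul_mem (hAH hx) (hBH hy), ?_,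
        map_mem_closure₂ continuous_mul ha hb fun x hx y hy => mul_mem_mul hx hy⟩
    calc #(A * B) ≤ #A * #B := mk_mul_le
      _ ≤ κ * κ := mul_le_mul' hAκ hBκ
      _ = κ := mul_eq_self hκ
  one_mem' := subset_boundedClosure (one_le_aleph0.trans hκ) H.one_mem
  inv_mem' {a} ha := by
    obtain ⟨A, hAH, hAκ, ha⟩ := mem_boundedClosure.1 ha
    exact mem_boundedClosure.2 ⟨A⁻¹, fun x hx => H.inv_mem_iff.1 (hAH hx),
      (mk_inv A).le.trans hAκ, inv_closure A ▸ inv_mem_inv.2 ha⟩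

end Subgroup

theorem Cardinal.power_power_eq_of_le {a μ κ : Cardinal} (hμ : ℵ₀ ≤ μ) (hκμ : κ ≤ μ)
    (hκ : κ ≠ 0) : (a ^ μ) ^ κ = a ^ μ := by
  rw [← power_mul, mul_eq_left hμ hκμ hκ]

theorem kappa_closure_subgroup_general {G : Type u} [Group G] [TopologicalSpace G]
    [IsTopologicalGroup G] (κ : Cardinal.{u})
    (hunc : Cardinal.aleph0 < κ) (H : Subgroup G)
    (hH : Cardinal.mk H ≤ (2 : Cardinal) ^ ((2 : Cardinal) ^ κ)) (D : Set G)
    (hD : D = ⋃ A ∈ {A : Set G | A ⊆ (H : Set G) ∧ Cardinal.mk A ≤ κ}, closure A) :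
    (∃ S : Subgroup G, (S : Set G) = D) ∧ (H : Set G) ⊆ D ∧
      ((∀ A : Set G, A ⊆ (H : Set G) → Cardinal.mk A ≤ κ →
          Cardinal.mk (closure A) ≤ (2 : Cardinal) ^ ((2 : Cardinal) ^ κ)) →
        Cardinal.mk D ≤ (2 : Cardinal) ^ ((2 : Cardinal) ^ κ)) := by
  have hκ : ℵ₀ ≤ κ := hunc.le
  have hκ_le : κ ≤ 2 ^ κ := (cantor κ).le
  have hpow : ((2 : Cardinal) ^ (2 : Cardinal) ^ κ) ^ κ = 2 ^ (2 : Cardinal) ^ κ :=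
    power_power_eq_of_le (hκ.trans hκ_le) hκ_le (aleph0_pos.trans_le hκ).ne'
  have hD : D = (H : Set G).boundedClosure κ := hD
  subst hD
  exact ⟨⟨H.boundedClosure hκ, rfl⟩, subset_boundedClosure (one_le_aleph0.trans hκ),
    mk_boundedClosure_le hH (hκ.trans (hκ_le.trans (cantor _).le)) hpow.le⟩

theorem kappa_closure_subgroup {G : Type u} [Group G] [TopologicalSpace G]
    [IsTopologicalGroup G] [T2Space G] (κ : Cardinal.{u}) (hreg : κ.IsRegular)
    (hunc : Cardinal.aleph0 < κ) (H : Subgroup G)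
    (hH : Cardinal.mk H ≤ (2 : Cardinal) ^ ((2 : Cardinal) ^ κ)) (D : Set G)
    (hD : D = ⋃ A ∈ {A : Set G | A ⊆ (H : Set G) ∧ Cardinal.mk A ≤ κ}, closure A) :
    (∃ S : Subgroup G, (S : Set G) = D) ∧ (H : Set G) ⊆ D ∧
      ((∀ A : Set G, A ⊆ (H : Set G) → Cardinal.mk A ≤ κ →
          Cardinal.mk (closure A) ≤ (2 : Cardinal) ^ ((2 : Cardinal) ^ κ)) →
        Cardinal.mk D ≤ (2 : Cardinal) ^ ((2 : Cardinal) ^ κ)) :=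
  kappa_closure_subgroup_general κ hunc H hH D hD
end

section
/- If G is an infinite pseudocompact Hausdorff topological group, then |G| ≥ 𝔠, the cardinality of the continuum. -/
/-!
Topological groups are completely regular, so in a pseudocompact group every locally finite family
of nonempty open sets is finite: bumps of heights `1, 2, 3, …` supported on infinitely many of them
would add up to a continuous unbounded function. Hence an infinite pseudocompact group is not
discrete, so by homogeneity it has no isolated points, and the closures of a decreasing sequence of
nonempty open sets always meet. Splitting nonempty open sets again and again into two open pieces
with disjoint closures then gives a binary tree whose `2 ^ ℵ₀` branches single out distinct points.
-/

/-- A space is pseudocompact if every continuous real-valued function is bounded. -/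
def Pseudocompact (X : Type*) [TopologicalSpace X] : Prop :=
  ∀ f : X → ℝ, Continuous f → ∃ M : ℝ, ∀ x, |f x| ≤ M

open Set Filter Topology Function Cardinal

section Pseudocompact

variable {X : Type*} [TopologicalSpace X]

theorem Pseudocompact.finite_of_locallyFinite [CompletelyRegularSpace X] (h : Pseudocompact X)
    {ι : Type*} {U : ι → Set X} (hU : ∀ i, IsOpen (U i)) (hne : ∀ i, (U i).Nonempty)
    (hfin : LocallyFinite U) : Finite ι := by
  by_contra hinf
  have e := (not_finite_iff_infinite.1 hinf).natEmbedding
  have hfin' : LocallyFinite (U ∘ e) := hfin.comp_injective e.injective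
  choose x hx using fun n => hne (e n)
  choose f hf_cont hf_zero hf_one using fun n =>
    CompletelyRegularSpace.completely_regular_isOpen (x n) (U (e n)) (hU _) (hx n)
  set g : ℕ → X → ℝ := fun n y => n * (1 - f n y)
  have hg_support : ∀ n, support (g n) ⊆ U (e n) := fun n y hy => by
    by_contra hyU
    exact hy (by simp [g, hf_one n hyU])
  have hg_nonneg : ∀ n y, 0 ≤ g n y := fun n y =>
    mul_nonneg n.cast_nonneg (sub_nonneg.2 (f n y).2.2)
  obtain ⟨M, hM⟩ := h (fun y => ∑ᶠ n, g n y)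
    (continuous_finsum (fun n => by fun_prop) (hfin'.subset hg_support))
  obtain ⟨n, hn⟩ := exists_nat_gt M
  have hle : (n : ℝ) ≤ ∑ᶠ k, g k (x n) :=
    calc (n : ℝ) = g n (x n) := by simp [g, hf_zero n]
      _ ≤ ∑ᶠ k, g k (x n) := single_le_finsum n
          ((hfin'.point_finite (x n)).subset fun k hk => hg_support k hk)
          fun k => hg_nonneg k _
  linarith [le_abs_self (∑ᶠ k, g k (x n)), hM (x n)]

theorem Pseudocompact.nonempty_iInter_closure [CompletelyRegularSpace X] (h : Pseudocompact X)
    {U : ℕ → Set X} (hU : ∀ n, IsOpen (U n)) (hne : ∀ n, (U n).Nonempty) (hanti : Antitone U) :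
    (⋂ n, closure (U n)).Nonempty := by
  by_contra hempty
  refine (h.finite_of_locallyFinite hU hne fun y => ?_).false
  obtain ⟨N, hN⟩ : ∃ N, y ∉ closure (U N) := by
    by_contra! hy
    exact hempty ⟨y, mem_iInter.2 hy⟩
  refine ⟨(closure (U N))ᶜ, isClosed_closure.isOpen_compl.mem_nhds hN,
    (finite_lt_nat N).subset fun n ⟨z, hzU, hz⟩ => ?_⟩
  by_contra hNn
  exact hz (subset_closure (hanti (not_lt.1 hNn) hzU))

theorem Pseudocompact.finite_of_discreteTopology [DiscreteTopology X] (h : Pseudocompact X) :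
    Finite X :=
  h.finite_of_locallyFinite (U := fun x => {x}) (fun _ => isOpen_discrete _) singleton_nonempty
    fun x => ⟨{x}, isOpen_discrete _ |>.mem_nhds rfl,
      (finite_singleton x).subset fun _ ⟨_, hy, hyx⟩ => hy.symm.trans hyx⟩

end Pseudocompact

section SplitBranch

variable {X : Type*}

def splitBranch (split : Set X → Bool → Set X) (σ : ℕ → Bool) : ℕ → Set X
  | 0 => univ
  | n + 1 => split (splitBranch split σ n) (σ n)

theorem splitBranch_eq_of_forall_lt_eq {split : Set X → Bool → Set X} {σ τ : ℕ → Bool} {n : ℕ}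
    (h : ∀ k < n, σ k = τ k) : splitBranch split σ n = splitBranch split τ n := by
  induction n with
  | zero => rfl
  | succ n ih => rw [splitBranch, splitBranch, ih fun k hk => h k (by omega), h n n.lt_succ_self]

end SplitBranch

section Splitting

variable {X : Type*} [TopologicalSpace X]

theorem IsOpen.exists_pairwise_disjoint_closure [T25Space X] [PerfectSpace X] {U : Set X}
    (hU : IsOpen U) (hne : U.Nonempty) :
    ∃ V : Bool → Set X, (∀ b, IsOpen (V b) ∧ (V b).Nonempty ∧ V b ⊆ U) ∧
      Pairwise (Disjoint on fun b => closure (V b)) := by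
  obtain ⟨x, hx⟩ := hne
  obtain ⟨y, ⟨hyU, -⟩, hyx⟩ := preperfect_iff_nhds.1 hU.preperfect x hx U (hU.mem_nhds hx)
  obtain ⟨A, hxA, hA, B, hyB, hB, hAB⟩ := exists_open_nhds_disjoint_closure hyx.symm
  refine ⟨fun b => cond b (B ∩ U) (A ∩ U), ?_, ?_⟩
  · rintro (_ | _)
    exacts [⟨hA.inter hU, ⟨x, hxA, hx⟩, inter_subset_right⟩,
      ⟨hB.inter hU, ⟨y, hyB, hyU⟩, inter_subset_right⟩]
  · have hAB' : Disjoint (closure (A ∩ U)) (closure (B ∩ U)) :=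
      hAB.mono (closure_mono inter_subset_left) (closure_mono inter_subset_left)
    rintro (_ | _) (_ | _) hne
    exacts [(hne rfl).elim, hAB', hAB'.symm, (hne rfl).elim]

theorem continuum_le_card_of_splitting [Nonempty X]
    (hsplit : ∀ U : Set X, IsOpen U → U.Nonempty → ∃ V : Bool → Set X,
      (∀ b, IsOpen (V b) ∧ (V b).Nonempty ∧ V b ⊆ U) ∧
      Pairwise (Disjoint on fun b => closure (V b)))
    (hnest : ∀ U : ℕ → Set X, (∀ n, IsOpen (U n)) → (∀ n, (U n).Nonempty) → Antitone U →
      (⋂ n, closure (U n)).Nonempty) :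
    𝔠 ≤ #X := by
  choose! split hsplit_sub hsplit_disj using hsplit
  have hbranch : ∀ σ n, IsOpen (splitBranch split σ n) ∧ (splitBranch split σ n).Nonempty := by
    intro σ n
    induction n with
    | zero => exact ⟨isOpen_univ, univ_nonempty⟩
    | succ n ih => exact ⟨(hsplit_sub _ ih.1 ih.2 _).1, (hsplit_sub _ ih.1 ih.2 _).2.1⟩
  have hanti : ∀ σ, Antitone (splitBranch split σ) := fun σ =>
    antitone_nat_of_succ_le fun n => (hsplit_sub _ (hbranch σ n).1 (hbranch σ n).2 (σ n)).2.2
  choose point hpoint using fun σ =>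
    hnest _ (fun n => (hbranch σ n).1) (fun n => (hbranch σ n).2) (hanti σ)
  have hinj : Injective point := by
    intro σ τ heq
    by_contra hne
    have hex : ∃ n, σ n ≠ τ n := Function.ne_iff.1 hne
    set n := Nat.find hex
    have hagree : splitBranch split σ n = splitBranch split τ n :=
      splitBranch_eq_of_forall_lt_eq fun k hk => not_not.1 (Nat.find_min hex hk)
    have hσ : point σ ∈ closure (split (splitBranch split σ n) (σ n)) :=
      mem_iInter.1 (hpoint σ) (n + 1)
    have hτ : point τ ∈ closure (split (splitBranch split σ n) (τ n)) :=
      hagree ▸ mem_iInter.1 (hpoint τ) (n + 1)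
    exact disjoint_left.1 (hsplit_disj _ (hbranch σ n).1 (hbranch σ n).2 (Nat.find_spec hex))
      hσ (heq ▸ hτ)
  simpa using lift_mk_le_lift_mk_of_injective hinj

end Splitting

section TopologicalGroup

variable {G : Type*} [Group G] [TopologicalSpace G] [IsTopologicalGroup G]

instance IsTopologicalGroup.completelyRegularSpace : CompletelyRegularSpace G :=
  .of_exists_uniformSpace ⟨IsTopologicalGroup.rightUniformSpace G, rfl⟩

theorem Pseudocompact.perfectSpace [Infinite G] (h : Pseudocompact G) : PerfectSpace G := by
  refine perfectSpace_iff_forall_not_isolated.2 fun x => neBot_iff.2 fun hx => ?_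
  have hone : IsOpen ({1} : Set G) := by
    simpa using isOpenMap_mul_right x⁻¹ _ ((isOpen_singleton_iff_punctured_nhds x).2 hx)
  have := discreteTopology_of_isOpen_singleton_one hone
  exact h.finite_of_discreteTopology.false

end TopologicalGroup

theorem continuum_le_card_of_pseudocompact {G : Type*} [Group G] [TopologicalSpace G]
    [IsTopologicalGroup G] [T2Space G] [Infinite G] (h : Pseudocompact G) :
    Cardinal.continuum ≤ Cardinal.mk G := by
  have := h.perfectSpace
  exact continuum_le_card_of_splitting (fun _ hU hne => hU.exists_pairwise_disjoint_closure hne)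
    fun _ hU hne hanti => h.nonempty_iInter_closure hU hne hanti
end

section
/- Let D be a Hausdorff topological group without nontrivial convergent sequences, with |D| ≤ 𝔠, and assume 𝔠 = ℵ₁ (CH). Then every compact subset of D is finite. -/
/-!
A countable compact Hausdorff space is first countable, so in a space without nontrivial
convergent sequences every countable compact set is finite. Consequently, in such a space that
is compact Hausdorff, an infinite closed set has two accumulation points, hence splits into two
disjoint infinite closed pieces, and a countable decreasing intersection of infinite closed sets
is again infinite. Splitting repeatedly along a well-order of type `ω₁` (all of whose initial
segments are countable) gives a Cantor tree whose `2 ^ ℵ₁` branches have pairwise disjoint,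
nonempty intersections. So an infinite compact set has at least `2 ^ ℵ₁ > ℵ₁ = 𝔠` points.
-/

open Filter Topology Set Function Cardinal

def NoNontrivialConvergentSeqs (X : Type*) [TopologicalSpace X] : Prop :=
  ∀ (u : ℕ → X) (x : X), Tendsto u atTop (𝓝 x) → ∀ᶠ n in atTop, u n = x

section

variable {X : Type*} [TopologicalSpace X]

lemma NoNontrivialConvergentSeqs.of_continuous_injective {Y : Type*} [TopologicalSpace Y]
    (hX : NoNontrivialConvergentSeqs X) {f : Y → X} (hf : Continuous f) (hinj : Injective f) :
    NoNontrivialConvergentSeqs Y := fun _ y hu =>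
  (hX _ _ ((hf.tendsto y).comp hu)).mono fun _ h => hinj h

section T2

variable [T2Space X] {K : Set X}

theorem IsCompact.isCountablyGenerated_nhdsWithin_of_countable (hK : IsCompact K)
    (hc : K.Countable) (z : X) : (𝓝[K] z).IsCountablyGenerated := by
  have : Countable ↥(K \ {z}) := (hc.mono sdiff_subset).to_subtype
  choose A B hA hB hzA hyB hAB using fun y : ↥(K \ {z}) => t2_separation (Ne.symm y.2.2)
  suffices h : 𝓝[K] z = 𝓟 K ⊓ ⨅ y, 𝓟 (A y) by rw [h]; infer_instance
  refine le_antisymm (le_inf inf_le_right (le_iInf fun y => ?_)) (le_inf ?_ inf_le_left)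
  · exact le_principal_iff.2 (mem_nhdsWithin_of_mem_nhds ((hA y).mem_nhds (hzA y)))
  -- `z` is the only cluster point in `K`: any other `y ∈ K` has a neighbourhood `B y` missing `A y`.
  refine hK.le_nhds_of_unique_clusterPt (mem_inf_of_left (mem_principal_self K)) fun y hyK hy => ?_
  by_contra hyz
  let y' : ↥(K \ {z}) := ⟨y, hyK, hyz⟩
  exact clusterPt_iff_not_disjoint.1 hy <| disjoint_of_disjoint_of_mem (hAB y').symm
    ((hB y').mem_nhds (hyB y')) (mem_inf_of_right (mem_iInf_of_mem y' (mem_principal_self _)))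

theorem IsCompact.finite_of_countable (hX : NoNontrivialConvergentSeqs X) (hK : IsCompact K)
    (hc : K.Countable) : K.Finite := by
  by_contra hinf
  obtain ⟨z, -, hz⟩ := Set.Infinite.exists_accPt_of_subset_isCompact hinf hK subset_rfl
  have := hK.isCountablyGenerated_nhdsWithin_of_countable hc z
  have : (𝓝[≠] z ⊓ 𝓟 K).IsCountablyGenerated := by
    rw [nhdsWithin, inf_right_comm, ← nhdsWithin]
    infer_instance
  have : (𝓝[≠] z ⊓ 𝓟 K).NeBot := hz
  obtain ⟨u, hu⟩ := (𝓝[≠] z ⊓ 𝓟 K).exists_seq_tendsto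
  have hne : ∀ᶠ n in atTop, u n ≠ z := hu (mem_inf_of_left self_mem_nhdsWithin)
  have hlim : Tendsto u atTop (𝓝 z) := hu.mono_right (inf_le_left.trans nhdsWithin_le_nhds)
  obtain ⟨n, hn, hn'⟩ := ((hX u z hlim).and hne).exists
  exact hn' hn

theorem NoNontrivialConvergentSeqs.infinite_iInter_of_antitone
    (hX : NoNontrivialConvergentSeqs X) {M : ℕ → Set X} (hM : Antitone M)
    (hMc : ∀ n, IsCompact (M n)) (hMi : ∀ n, (M n).Infinite) : (⋂ n, M n).Infinite := by
  intro hfin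
  choose p hp using fun n => ((hMi n).sdiff hfin).nonempty
  have hcl : closure (range p) ⊆ range p ∪ ⋂ n, M n := by
    rw [union_iInter]
    refine subset_iInter fun n => (closure_minimal ?_ (((finite_Iio n).image p).isClosed.union
      (hMc n).isClosed)).trans (union_subset_union_left _ (image_subset_range _ _))
    rintro _ ⟨k, rfl⟩
    rcases lt_or_ge k n with hk | hk
    exacts [Or.inl (mem_image_of_mem p hk), Or.inr (hM hk (hp k).1)]
  have hfin_range : (range p).Finite :=
    ((hMc 0).closure_of_subset (range_subset_iff.2 fun n => hM (Nat.zero_le n) (hp n).1)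
      |>.finite_of_countable hX (((countable_range p).union hfin.countable).mono hcl)).subset
      subset_closure
  -- Each value of `p` lies outside some `M m`, hence is not taken again after time `m`.
  have hev : ∀ x ∈ range p, ∀ᶠ n in atTop, p n ≠ x := by
    rintro _ ⟨k, rfl⟩
    obtain ⟨m, hm⟩ : ∃ m, p k ∉ M m := by simpa using (hp k).2
    filter_upwards [eventually_ge_atTop m] with n hn h
    exact hm (h ▸ hM hn (hp n).1)
  obtain ⟨n, hn⟩ := ((eventually_all_finite hfin_range).2 hev).exists
  exact hn _ (mem_range_self n) rfl

theorem NoNontrivialConvergentSeqs.infinite_iInter_of_directed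
    (hX : NoNontrivialConvergentSeqs X) {ι : Type*} [Countable ι] [Nonempty ι] {K : ι → Set X}
    (hd : Directed (· ⊇ ·) K) (hK : ∀ i, IsCompact (K i)) (hinf : ∀ i, (K i).Infinite) :
    (⋂ i, K i).Infinite := by
  have := Encodable.ofCountable ι
  have : Inhabited ι := Classical.inhabited_of_nonempty ‹_›
  exact (hX.infinite_iInter_of_antitone hd.sequence_anti (fun n => hK _) fun n => hinf _).mono
    (subset_iInter fun i => (iInter_subset (K ∘ hd.sequence K) _).trans (hd.sequence_le i))

theorem IsCompact.nontrivial_derivedSet (hX : NoNontrivialConvergentSeqs X) (hK : IsCompact K)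
    (hinf : K.Infinite) : (derivedSet K).Nontrivial := by
  by_contra h
  rw [not_nontrivial_iff] at h
  let e := hinf.natEmbedding K
  have hTK : range (Subtype.val ∘ e) ⊆ K := by
    rintro _ ⟨n, rfl⟩
    exact (e n).2
  have hT : (range (Subtype.val ∘ e)).Infinite :=
    infinite_range_of_injective (Subtype.val_injective.comp e.injective)
  have hcl : closure (range (Subtype.val ∘ e)) ⊆ range (Subtype.val ∘ e) ∪ derivedSet K := by
    rw [closure_eq_self_union_derivedSet]
    exact union_subset_union_right _ (derivedSet_mono _ _ hTK)
  exact hT.mono subset_closure <| (hK.closure_of_subset hTK).finite_of_countable hX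
    (((countable_range _).union h.countable).mono hcl)

end T2

def IsCantorSplit (K : Set X) (L : Bool → Set X) : Prop :=
  (∀ b, L b ⊆ K ∧ IsClosed (L b) ∧ (L b).Infinite) ∧ Pairwise (Disjoint on L)

def cantorSplit (K : Set X) : Bool → Set X :=
  Classical.epsilon (IsCantorSplit K)

section CantorTree

variable {ι : Type*} [LinearOrder ι] [WellFoundedLT ι]

variable (X) in
def cantorNode (σ : ι → Bool) : ι → Set X :=
  WellFoundedLT.fix fun i node => ⋂ (j) (hj : j < i), cantorSplit (node j hj) (σ j)

variable (X) in
theorem cantorNode_eq (σ : ι → Bool) (i : ι) :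
    cantorNode X σ i = ⋂ (j) (_ : j < i), cantorSplit (cantorNode X σ j) (σ j) :=
  WellFoundedLT.fix_eq _ i

theorem cantorNode_subset_cantorSplit (σ : ι → Bool) {i j : ι} (hji : j < i) :
    cantorNode X σ i ⊆ cantorSplit (cantorNode X σ j) (σ j) := by
  rw [cantorNode_eq]
  exact biInter_subset_of_mem hji

theorem cantorSplit_subset_cantorSplit {σ : ι → Bool} {i j : ι}
    (hi : IsCantorSplit (cantorNode X σ i) (cantorSplit (cantorNode X σ i))) (hji : j < i) :
    cantorSplit (cantorNode X σ i) (σ i) ⊆ cantorSplit (cantorNode X σ j) (σ j) :=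
  (hi.1 (σ i)).1.trans (cantorNode_subset_cantorSplit σ hji)

theorem cantorNode_congr {σ τ : ι → Bool} {i : ι} (h : ∀ j < i, σ j = τ j) :
    cantorNode X σ i = cantorNode X τ i := by
  induction i using WellFoundedLT.induction with
  | ind i ih =>
  rw [cantorNode_eq, cantorNode_eq]
  refine iInter₂_congr fun j hj => ?_
  rw [ih j hj fun k hk => h k (hk.trans hj), h j hj]

section CompactSpace

variable [CompactSpace X] [T2Space X]

theorem exists_isCantorSplit (hX : NoNontrivialConvergentSeqs X) {K : Set X} (hK : IsClosed K)
    (hinf : K.Infinite) : ∃ L, IsCantorSplit K L := by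
  obtain ⟨y₀, hy₀, y₁, hy₁, hne⟩ := hK.isCompact.nontrivial_derivedSet hX hinf
  obtain ⟨U₀, hyU₀, hU₀, U₁, hyU₁, hU₁, hdisj⟩ := exists_open_nhds_disjoint_closure hne
  have hpiece : ∀ {y U}, AccPt y (𝓟 K) → y ∈ U → IsOpen U → (K ∩ closure U).Infinite :=
    fun hy hyU hU => Set.Infinite.of_accPt <| accPt_iff_frequently.2 <|
      ((accPt_iff_frequently.1 hy).and_eventually (hU.mem_nhds hyU)).mono
      fun _ ⟨⟨hne, hK⟩, hU⟩ => ⟨hne, hK, subset_closure hU⟩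
  refine ⟨fun b => cond b (K ∩ closure U₁) (K ∩ closure U₀), fun b => ?_,
    pairwise_disjoint_on_bool.2 (hdisj.symm.mono inter_subset_right inter_subset_right)⟩
  cases b
  exacts [⟨inter_subset_left, hK.inter isClosed_closure, hpiece hy₀ hyU₀ hU₀⟩,
    ⟨inter_subset_left, hK.inter isClosed_closure, hpiece hy₁ hyU₁ hU₁⟩]

theorem isCantorSplit_cantorSplit (hX : NoNontrivialConvergentSeqs X) {K : Set X}
    (hK : IsClosed K) (hinf : K.Infinite) : IsCantorSplit K (cantorSplit K) :=
  Classical.epsilon_spec (exists_isCantorSplit hX hK hinf)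

theorem isClosed_and_infinite_cantorNode [Infinite X] (hX : NoNontrivialConvergentSeqs X)
    (hι : ∀ i : ι, (Iio i).Countable) (σ : ι → Bool) (i : ι) :
    IsClosed (cantorNode X σ i) ∧ (cantorNode X σ i).Infinite := by
  induction i using WellFoundedLT.induction with
  | ind i ih =>
  have hS : ∀ j < i, IsCantorSplit (cantorNode X σ j) (cantorSplit (cantorNode X σ j)) :=
    fun j hj => isCantorSplit_cantorSplit hX (ih j hj).1 (ih j hj).2
  refine ⟨by rw [cantorNode_eq]; exact isClosed_biInter fun j hj => ((hS j hj).1 _).2.1, ?_⟩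
  rcases isEmpty_or_nonempty (Iio i) with h | h
  · refine infinite_univ.mono ?_
    rw [cantorNode_eq]
    exact subset_iInter₂ fun j hj => (h.false ⟨j, hj⟩).elim
  have : Countable (Iio i) := (hι i).to_subtype
  refine (hX.infinite_iInter_of_directed
    (K := fun j : Iio i => cantorSplit (cantorNode X σ j) (σ j)) ?_
    (fun j => ((hS j j.2).1 _).2.1.isCompact) fun j => ((hS j j.2).1 _).2.2).mono ?_
  · exact Antitone.directed_ge (antitone_iff_forall_lt.2 fun j k hjk =>
      cantorSplit_subset_cantorSplit (hS k k.2) hjk)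
  · rw [cantorNode_eq]
    exact subset_iInter₂ fun j hj => iInter_subset_of_subset ⟨j, hj⟩ subset_rfl

theorem NoNontrivialConvergentSeqs.exists_injective_of_countable_Iio [Infinite X]
    (hX : NoNontrivialConvergentSeqs X) (hι : ∀ i : ι, (Iio i).Countable) :
    ∃ f : (ι → Bool) → X, Injective f := by
  have hS (σ : ι → Bool) (i : ι) :
      IsCantorSplit (cantorNode X σ i) (cantorSplit (cantorNode X σ i)) :=
    isCantorSplit_cantorSplit hX (isClosed_and_infinite_cantorNode hX hι σ i).1
      (isClosed_and_infinite_cantorNode hX hι σ i).2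
  have hbranch (σ : ι → Bool) : (⋂ i, cantorSplit (cantorNode X σ i) (σ i)).Nonempty := by
    rcases isEmpty_or_nonempty ι with hι | hι
    · simp
    refine IsCompact.nonempty_iInter_of_directed_nonempty_isCompact_isClosed _
      (Antitone.directed_ge (antitone_iff_forall_lt.2 fun j k hjk =>
        cantorSplit_subset_cantorSplit (hS σ k) hjk))
      (fun i => ((hS σ i).1 _).2.2.nonempty) (fun i => ((hS σ i).1 _).2.1.isCompact)
      fun i => ((hS σ i).1 _).2.1
  choose f hf using hbranch
  refine ⟨f, fun σ τ hστ => by_contra fun hne => ?_⟩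
  obtain ⟨i, hi, hmin⟩ := wellFounded_lt.has_min {j | σ j ≠ τ j} (Function.ne_iff.1 hne)
  have hnode : cantorNode X σ i = cantorNode X τ i :=
    cantorNode_congr fun j hj => not_not.1 fun h => hmin j h hj
  refine ((hS σ i).2 hi).ne_of_mem (mem_iInter.1 (hf σ) i) ?_ hστ
  rw [hnode]
  exact mem_iInter.1 (hf τ) i

end CompactSpace

end CantorTree

theorem NoNontrivialConvergentSeqs.two_pow_aleph_one_le_mk [CompactSpace X] [T2Space X]
    [Infinite X] (hX : NoNontrivialConvergentSeqs X) : 2 ^ ℵ₁ ≤ #X := by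
  obtain ⟨f, hf⟩ := hX.exists_injective_of_countable_Iio (ι := (ℵ₁ : Cardinal.{_}).ord.ToType)
    fun i => le_aleph0_iff_set_countable.1 (lt_aleph_one_iff.1 (by simpa using mk_Iio_lt i))
  simpa using mk_le_of_injective hf

end

section

universe u v

theorem Cardinal.continuum_eq_aleph_one_univ (hCH : (𝔠 : Cardinal.{v}) = ℵ₁) :
    (𝔠 : Cardinal.{u}) = ℵ₁ :=
  lift_inj.{u, v}.1 <| by
    rw [lift_continuum, ← lift_continuum.{u, v}, hCH, lift_aleph, lift_aleph]
    simp

end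

theorem compact_finite_of_no_convergent_sequences_general {D : Type*}
    [TopologicalSpace D] [T2Space D]
    (hseq : ∀ (u : ℕ → D) (x : D), Tendsto u atTop (𝓝 x) → ∀ᶠ n in atTop, u n = x)
    (hcard : Cardinal.mk D ≤ Cardinal.continuum)
    (hCH : Cardinal.continuum = Cardinal.aleph 1) :
    ∀ C : Set D, IsCompact C → C.Finite := by
  intro C hC
  by_contra hinf
  have : CompactSpace C := isCompact_iff_compactSpace.mp hC
  have : Infinite C := infinite_coe_iff.2 hinf
  have hC_seq : NoNontrivialConvergentSeqs C :=
    NoNontrivialConvergentSeqs.of_continuous_injective hseq continuous_subtype_val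
      Subtype.val_injective
  exact (cantor ℵ₁).not_ge <| hC_seq.two_pow_aleph_one_le_mk.trans <|
    (mk_set_le C).trans (hcard.trans (continuum_eq_aleph_one_univ hCH).le)

theorem compact_finite_of_no_convergent_sequences {D : Type*} [Group D]
    [TopologicalSpace D] [IsTopologicalGroup D] [T2Space D]
    (hseq : ∀ (u : ℕ → D) (x : D), Tendsto u atTop (𝓝 x) → ∀ᶠ n in atTop, u n = x)
    (hcard : Cardinal.mk D ≤ Cardinal.continuum)
    (hCH : Cardinal.continuum = Cardinal.aleph 1) :
    ∀ C : Set D, IsCompact C → C.Finite :=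
  compact_finite_of_no_convergent_sequences_general hseq hcard hCH
end

section
/- Let K be a nontrivial topological group, I an infinite set, and X ⊆ K^I a subset such that for every countable J ⊆ I, the projection of the subgroup generated by X onto K^J is all of K^J. Then the subgroup generated by X is Gδ-dense in K^I, i.e., it meets every nonempty Gδ subset of K^I. -/
/-! A basic open set of a product constrains only finitely many coordinates, so a countable
intersection of open sets containing `x` contains every point that agrees with `x` on some
countable set `J` of coordinates. By hypothesis the subgroup has such a point. -/

open Set

section Pi

variable {ι : Type*} {π : ι → Type*} [∀ i, TopologicalSpace (π i)]

theorem IsOpen.exists_finset_forall_eq_imp_mem {U : Set (∀ i, π i)} (hU : IsOpen U)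
    {x : ∀ i, π i} (hx : x ∈ U) :
    ∃ F : Finset ι, ∀ y, (∀ i ∈ F, y i = x i) → y ∈ U := by
  obtain ⟨F, u, hxu, hFU⟩ := isOpen_pi_iff.mp hU x hx
  refine ⟨F, fun y hyx => hFU fun i hi => ?_⟩
  rw [hyx i hi]
  exact (hxu i hi).2

theorem exists_countable_forall_eq_imp_mem_iInter {κ : Type*} [Countable κ]
    {S : κ → Set (∀ i, π i)} (hS : ∀ n, IsOpen (S n)) {x : ∀ i, π i}
    (hx : x ∈ ⋂ n, S n) :
    ∃ J : Set ι, J.Countable ∧ ∀ y, (∀ i ∈ J, y i = x i) → y ∈ ⋂ n, S n := by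
  choose F hF using fun n => (hS n).exists_finset_forall_eq_imp_mem (mem_iInter.mp hx n)
  refine ⟨⋃ n, (F n : Set ι), countable_iUnion fun n => (F n).countable_toSet,
    fun y hyx => ?_⟩
  exact mem_iInter.mpr fun n => hF n y fun i hi => hyx i (mem_iUnion_of_mem n hi)

end Pi

theorem gdelta_dense_of_countable_projections_surjective_general {K : Type*} {I : Type*}
    [Group K] [TopologicalSpace K]
    (X : Set (I → K))
    (hproj : ∀ J : Set I, J.Countable → ∀ y : J → K,
      ∃ g ∈ Subgroup.closure X, ∀ j : J, g (j : I) = y j) :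
    ∀ S : ℕ → Set (I → K), (∀ n, IsOpen (S n)) → (⋂ n, S n).Nonempty →
      ((⋂ n, S n) ∩ (Subgroup.closure X : Set (I → K))).Nonempty := by
  rintro S hS ⟨x, hx⟩
  obtain ⟨J, hJ, hJS⟩ := exists_countable_forall_eq_imp_mem_iInter hS hx
  obtain ⟨g, hgX, hgx⟩ := hproj J hJ fun j => x j
  exact ⟨g, hJS g fun i hi => hgx ⟨i, hi⟩, hgX⟩

theorem gdelta_dense_of_countable_projections_surjective {K : Type*} {I : Type*}
    [Group K] [TopologicalSpace K] [IsTopologicalGroup K] [CompactSpace K]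
    [TopologicalSpace.MetrizableSpace K] [Nontrivial K] [Infinite I]
    (X : Set (I → K))
    (hproj : ∀ J : Set I, J.Countable → ∀ y : J → K,
      ∃ g ∈ Subgroup.closure X, ∀ j : J, g (j : I) = y j) :
    ∀ S : ℕ → Set (I → K), (∀ n, IsOpen (S n)) → (⋂ n, S n).Nonempty →
      ((⋂ n, S n) ∩ (Subgroup.closure X : Set (I → K))).Nonempty :=
  gdelta_dense_of_countable_projections_surjective_general X hproj
end
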